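/- For every integer p ≥ 1, the growth constants of partially directed paths in the symmetric wedge V_p and the asymmetric wedge W_p both equal 1+√2: lim_{n→∞} v_{n,p}^{1/n} = lim_{n→∞} w_{n,p}^{1/n} = 1+√2. -/

import Mathlib

/-- Allowed steps: north, south, east. -/
def AllowedStep (s : ℤ × ℤ) : Prop := s = (0, 1) ∨ s = (0, -1) ∨ s = (1, 0)

/-- No north step immediately follows a south step or vice versa. -/
def NoReversal (l : List (ℤ × ℤ)) : Prop :=
  l.Chain' (fun s t => ¬(s = (0, 1) ∧ t = (0, -1)) ∧ ¬(s = (0, -1) ∧ t = (0, 1)))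

/-- A partially directed self-avoiding path of length `n`, encoded by its list of steps. -/
def IsPDPath (n : ℕ) (l : List (ℤ × ℤ)) : Prop :=
  l.length = n ∧ (∀ s ∈ l, AllowedStep s) ∧ NoReversal l

/-- The vertices visited by a path starting at the origin. -/
def pathVertices (l : List (ℤ × ℤ)) : List (ℤ × ℤ) := l.scanl (· + ·) (0, 0)

/-- Number of unrestricted partially directed paths of length `n`. -/
noncomputable def numPD (n : ℕ) : ℕ := Nat.card {l : List (ℤ × ℤ) // IsPDPath n l}

/-- Membership in the symmetric wedge `V_p`. -/
def InSymWedge (p : ℕ) (q : ℤ × ℤ) : Prop :=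
  0 ≤ q.1 ∧ -(p : ℤ) * q.1 ≤ q.2 ∧ q.2 ≤ (p : ℤ) * q.1

/-- Membership in the asymmetric wedge `W_p`. -/
def InAsymWedge (p : ℕ) (q : ℤ × ℤ) : Prop :=
  0 ≤ q.1 ∧ 0 ≤ q.2 ∧ q.2 ≤ (p : ℤ) * q.1

/-- Number of partially directed paths of length `n` confined to the symmetric wedge `V_p`. -/
noncomputable def numPDsym (p n : ℕ) : ℕ :=
  Nat.card {l : List (ℤ × ℤ) // IsPDPath n l ∧ ∀ q ∈ pathVertices l, InSymWedge p q}

/-- Number of partially directed paths of length `n` confined to the asymmetric wedge `W_p`. -/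
noncomputable def numPDasym (p n : ℕ) : ℕ :=
  Nat.card {l : List (ℤ × ℤ) // IsPDPath n l ∧ ∀ q ∈ pathVertices l, InAsymWedge p q}

/-- Number of partially directed paths of length `n` in the quadrant (x ≥ 0 and y ≥ 0)
whose last vertex lies on the line `Y = 0`. -/
noncomputable def numPDquadEnd0 (n : ℕ) : ℕ :=
  Nat.card {l : List (ℤ × ℤ) //
    IsPDPath n l ∧ (∀ q ∈ pathVertices l, 0 ≤ q.1 ∧ 0 ≤ q.2) ∧ l.sum.2 = 0}

/-- Number of partially directed paths of length `n` lying on or above the line `Y = 0`. -/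
noncomputable def numPDhalf (n : ℕ) : ℕ :=
  Nat.card {l : List (ℤ × ℤ) // IsPDPath n l ∧ ∀ q ∈ pathVertices l, 0 ≤ q.2}

/-- Number of partially directed paths of length `n` lying on or above the line `Y = 0`
whose last vertex lies on the line `Y = 0`. -/
noncomputable def numPDhalfEnd0 (n : ℕ) : ℕ :=
  Nat.card {l : List (ℤ × ℤ) //
    IsPDPath n l ∧ (∀ q ∈ pathVertices l, 0 ≤ q.2) ∧ l.sum.2 = 0}

/-!
The numbers `c n` of all partially directed paths satisfy `c (n + 2) = 2 c (n + 1) + c n`, so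
`σ ^ n ≤ c n ≤ σ ^ (n + 1)` for the silver ratio `σ = 1 + √2`, and `w n ≤ v n ≤ c n`.

For the lower bound, some endpoint height `h` is reached by at least `c n / (2n + 1)` paths of
length `n`. Such a path, an east step and the reflection of another one form a path of length
`2n + 1` returning to height `0`; cutting it at a lowest vertex and swapping the two pieces around
an east step gives a loop of length `2n + 2` in the upper half-plane. So the number `h L` of such
loops of length `L` satisfies `(2n + 3) ^ 3 * h (2n + 2) ≥ c n ^ 2 ≥ σ ^ (2n)`, and
`h L ^ (1 / (L + 1))` comes arbitrarily close to `σ`. A loop of length `L` stays below height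
`L`, so `k` of them separated by east steps and preceded by `L` east steps form a path in `W_p`
(for `p ≥ 1`): `h L ^ k ≤ w (L + k (L + 1))`, and `w` grows at least at rate `h L ^ (1 / (L + 1))`.
-/

open Filter Topology

/-! ### Paths -/

def StepCompatible (s t : ℤ × ℤ) : Prop :=
  ¬(s = (0, 1) ∧ t = (0, -1)) ∧ ¬(s = (0, -1) ∧ t = (0, 1))

lemma stepCompatible_east_left (t : ℤ × ℤ) : StepCompatible (1, 0) t := by simp [StepCompatible]

lemma stepCompatible_east_right (s : ℤ × ℤ) : StepCompatible s (1, 0) := by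
  simp [StepCompatible]

lemma allowedStep_east : AllowedStep (1, 0) := Or.inr (Or.inr rfl)

lemma finite_setOf_allowedStep : {s | AllowedStep s}.Finite :=
  (Set.toFinite {(0, 1), (0, -1), (1, 0)}).subset fun s hs => by simpa [AllowedStep] using hs

lemma finite_setOf_isPDPath (n : ℕ) : {l | IsPDPath n l}.Finite := by
  have := finite_setOf_allowedStep.to_subtype
  refine ((List.finite_length_eq {s | AllowedStep s} n).image (List.map Subtype.val)).subset ?_
  rintro l ⟨hlen, hsteps, -⟩
  lift l to List {s | AllowedStep s} using hsteps
  exact ⟨l, show l.length = n by simpa using hlen, rfl⟩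

lemma finite_setOf_isPDPath_and (n : ℕ) (Q : List (ℤ × ℤ) → Prop) :
    {l | IsPDPath n l ∧ Q l}.Finite :=
  (finite_setOf_isPDPath n).subset fun _ h => h.1

lemma isPDPath_nil : IsPDPath 0 [] := ⟨rfl, by simp, List.isChain_nil⟩

lemma isPDPath_replicate_east (n : ℕ) : IsPDPath n (List.replicate n (1, 0)) :=
  ⟨by simp, fun s hs => List.eq_of_mem_replicate hs ▸ allowedStep_east,
    List.isChain_replicate_of_rel _ (stepCompatible_east_left _)⟩

namespace IsPDPath

variable {m n : ℕ} {s : ℤ × ℤ} {l r : List (ℤ × ℤ)}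

lemma tail (h : IsPDPath (n + 1) (s :: l)) : IsPDPath n l :=
  ⟨by simpa using h.1, fun t ht => h.2.1 t (List.mem_cons_of_mem _ ht), h.2.2.tail⟩

lemma cons (h : IsPDPath n l) (hs : AllowedStep s) (hc : ∀ t ∈ l.head?, StepCompatible s t) :
    IsPDPath (n + 1) (s :: l) :=
  ⟨by simp [h.1], List.forall_mem_cons.2 ⟨hs, h.2.1⟩, List.isChain_cons.2 ⟨hc, h.2.2⟩⟩

lemma append (hl : IsPDPath m l) (hr : IsPDPath n r)
    (hc : ∀ x ∈ l.getLast?, ∀ y ∈ r.head?, StepCompatible x y) : IsPDPath (m + n) (l ++ r) :=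
  ⟨by simp [hl.1, hr.1], List.forall_mem_append.2 ⟨hl.2.1, hr.2.1⟩,
    List.isChain_append.2 ⟨hl.2.2, hr.2.2, hc⟩⟩

lemma of_append (h : IsPDPath n (l ++ r)) : IsPDPath l.length l ∧ IsPDPath r.length r :=
  ⟨⟨rfl, fun s hs => h.2.1 s (List.mem_append_left r hs), (List.isChain_append.1 h.2.2).1⟩,
    ⟨rfl, fun s hs => h.2.1 s (List.mem_append_right l hs), (List.isChain_append.1 h.2.2).2.1⟩⟩

lemma append_east (hl : IsPDPath m l) (hr : IsPDPath n r) :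
    IsPDPath (m + 1 + n) (l ++ (1, 0) :: r) := by
  rw [add_assoc, add_comm 1]
  refine hl.append (hr.cons allowedStep_east fun t _ => stepCompatible_east_left t) ?_
  rintro x - _ ⟨⟩
  exact stepCompatible_east_right x

lemma replicate_east_append (h : IsPDPath n l) : IsPDPath (m + n) (List.replicate m (1, 0) ++ l) :=
  (isPDPath_replicate_east m).append h fun _ hx y _ =>
    List.eq_of_mem_replicate (List.mem_of_mem_getLast? hx) ▸ stepCompatible_east_left y

end IsPDPath

def reflectPath (l : List (ℤ × ℤ)) : List (ℤ × ℤ) := l.map fun s => (s.1, -s.2)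

lemma reflectPath_injective : Function.Injective reflectPath :=
  List.map_injective_iff.2 fun s t h => by simpa [Prod.ext_iff] using h

lemma snd_sum_reflectPath (l : List (ℤ × ℤ)) : (reflectPath l).sum.2 = -l.sum.2 := by
  induction l with
  | nil => rfl
  | cons s l ih => simp_all [reflectPath]; ring

lemma IsPDPath.reflectPath {n : ℕ} {l : List (ℤ × ℤ)} (h : IsPDPath n l) :
    IsPDPath n (reflectPath l) := by
  refine ⟨by simp [_root_.reflectPath, h.1], ?_, (List.isChain_map _).2 (h.2.2.imp ?_)⟩
  · simp only [_root_.reflectPath, List.mem_map]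
    rintro _ ⟨s, hs, rfl⟩
    rcases h.2.1 s hs with rfl | rfl | rfl <;> simp [AllowedStep]
  · rintro ⟨a, b⟩ ⟨c, d⟩
    simp only [Prod.mk.injEq]
    omega

/-! ### Vertices -/

lemma pathVertices_eq_partialSums (l : List (ℤ × ℤ)) : pathVertices l = l.partialSums := rfl

lemma forall_mem_pathVertices_cons {P : ℤ × ℤ → Prop} {s : ℤ × ℤ} {l : List (ℤ × ℤ)} :
    (∀ v ∈ pathVertices (s :: l), P v) ↔ P 0 ∧ ∀ v ∈ pathVertices l, P (s + v) := by
  simp only [pathVertices_eq_partialSums, List.partialSums_cons, List.forall_mem_cons,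
    List.forall_mem_map]

lemma zero_mem_pathVertices (l : List (ℤ × ℤ)) : 0 ∈ pathVertices l := by
  cases l <;> simp [pathVertices_eq_partialSums, List.partialSums_cons]

lemma sum_mem_pathVertices (l : List (ℤ × ℤ)) : l.sum ∈ pathVertices l := by
  rw [pathVertices_eq_partialSums, List.mem_iff_getElem]
  exact ⟨l.length, by simp, by simp⟩

lemma forall_mem_pathVertices_append {P : ℤ × ℤ → Prop} {l r : List (ℤ × ℤ)} :
    (∀ v ∈ pathVertices (l ++ r), P v) ↔
      (∀ v ∈ pathVertices l, P v) ∧ ∀ v ∈ pathVertices r, P (l.sum + v) := by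
  induction l generalizing P with
  | nil =>
    simp only [List.nil_append, List.sum_nil, zero_add, pathVertices, List.scanl_nil,
      List.forall_mem_singleton, iff_and_self]
    exact fun h => h 0 (zero_mem_pathVertices r)
  | cons s l ih =>
    simp only [List.cons_append, forall_mem_pathVertices_cons, ih, List.sum_cons, add_assoc,
      and_assoc]

lemma exists_take_sum_eq_of_mem_pathVertices {l : List (ℤ × ℤ)} {v : ℤ × ℤ}
    (hv : v ∈ pathVertices l) : ∃ j ≤ l.length, (l.take j).sum = v := by
  obtain ⟨j, hj, rfl⟩ := List.mem_iff_getElem.1 hv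
  simp only [pathVertices_eq_partialSums, List.length_partialSums] at hj
  exact ⟨j, by omega, by simp [pathVertices_eq_partialSums]⟩

lemma fst_nonneg_and_abs_snd_le_of_mem_pathVertices {l : List (ℤ × ℤ)}
    (hl : ∀ s ∈ l, AllowedStep s) : ∀ v ∈ pathVertices l, 0 ≤ v.1 ∧ |v.2| ≤ l.length := by
  induction l with
  | nil => simp [pathVertices]
  | cons s l ih =>
    rw [List.forall_mem_cons] at hl
    refine forall_mem_pathVertices_cons.2 ⟨by simp; positivity, fun v hv => ?_⟩
    obtain ⟨h1, h2⟩ := ih hl.2 v hv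
    rw [abs_le] at h2 ⊢
    rcases hl.1 with rfl | rfl | rfl <;> simp <;> omega

/-! ### The recurrence for all paths -/

lemma numPD_eq_ncard (n : ℕ) : numPD n = {l | IsPDPath n l}.ncard := rfl

lemma isPDPath_singleton_iff {s : ℤ × ℤ} : IsPDPath 1 [s] ↔ AllowedStep s :=
  ⟨fun h => h.2.1 s (List.mem_singleton_self s),
    fun h => ⟨rfl, by simpa using h, List.isChain_singleton s⟩⟩

lemma numPD_zero : numPD 0 = 1 := by
  have : {l | IsPDPath 0 l} = {[]} := by
    ext l
    exact ⟨fun h => List.length_eq_zero_iff.1 h.1, fun h => h ▸ isPDPath_nil⟩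
  rw [numPD_eq_ncard, this, Set.ncard_singleton]

lemma numPD_one : numPD 1 = 3 := by
  have : {l | IsPDPath 1 l} = ↑({[(0, 1)], [(0, -1)], [(1, 0)]} : Finset (List (ℤ × ℤ))) := by
    ext l
    constructor
    · intro h
      obtain ⟨s, rfl⟩ := List.length_eq_one_iff.1 h.1
      rcases isPDPath_singleton_iff.1 h with rfl | rfl | rfl <;> simp
    · simp only [Finset.coe_insert, Finset.coe_singleton, Set.mem_insert_iff,
        Set.mem_singleton_iff]
      rintro (rfl | rfl | rfl) <;> exact isPDPath_singleton_iff.2 (by simp [AllowedStep])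
  rw [numPD_eq_ncard, this, Set.ncard_coe_finset]
  rfl

def prependVertical (r : List (ℤ × ℤ)) : List (ℤ × ℤ) :=
  (if r.head? = some (0, -1) then (0, -1) else (0, 1)) :: r

lemma IsPDPath.prependVertical {n : ℕ} {r : List (ℤ × ℤ)} (h : IsPDPath n r) :
    IsPDPath (n + 1) (prependVertical r) := by
  unfold _root_.prependVertical
  split_ifs with hS
  · refine h.cons (by simp [AllowedStep]) fun t ht => ?_
    obtain rfl : t = (0, -1) := by simpa [hS] using ht.symm
    simp [StepCompatible]
  · refine h.cons (by simp [AllowedStep]) fun t ht => ?_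
    have : t ≠ (0, -1) := fun h => hS (h ▸ ht)
    simp [StepCompatible, this]

/-- A vertical first step is determined by the second step unless the latter is east; after an
east step both vertical steps are allowed, and the paths starting south-then-east form the third
piece. -/
lemma setOf_isPDPath_add_two (n : ℕ) :
    {l | IsPDPath (n + 2) l} =
      List.cons (1, 0) '' {l | IsPDPath (n + 1) l} ∪ prependVertical '' {l | IsPDPath (n + 1) l} ∪
        (fun r => (0, -1) :: (1, 0) :: r) '' {l | IsPDPath n l} := by
  ext l
  constructor
  · intro h
    match l, h with
    | s :: t :: r, h =>
      have hc : StepCompatible s t := (List.isChain_cons_cons.1 h.2.2).1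
      by_cases hE : s = (1, 0)
      · exact Or.inl (Or.inl ⟨t :: r, h.tail, by rw [hE]⟩)
      by_cases hSE : s = (0, -1) ∧ t = (1, 0)
      · exact Or.inr ⟨r, h.tail.tail, by rw [hSE.1, hSE.2]⟩
      refine Or.inl (Or.inr ⟨t :: r, h.tail, ?_⟩)
      have hs := h.2.1 s (by simp)
      have ht := h.2.1 t (by simp)
      simp only [prependVertical, List.head?_cons, Option.some.injEq, List.cons.injEq, and_true]
      unfold AllowedStep at hs ht
      unfold StepCompatible at hc
      rcases hs with rfl | rfl | rfl <;> rcases ht with rfl | rfl | rfl <;> simp_all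
  · rintro ((⟨r, hr, rfl⟩ | ⟨r, hr, rfl⟩) | ⟨r, hr, rfl⟩)
    · exact hr.cons allowedStep_east fun t _ => stepCompatible_east_left t
    · exact hr.prependVertical
    · refine (hr.cons allowedStep_east fun t _ => stepCompatible_east_left t).cons
        (by simp [AllowedStep]) ?_
      rintro _ ⟨⟩
      exact stepCompatible_east_right _

lemma numPD_add_two (n : ℕ) : numPD (n + 2) = 2 * numPD (n + 1) + numPD n := by
  have hfin := finite_setOf_isPDPath
  have hAB : Disjoint (List.cons (1, 0) '' {l | IsPDPath (n + 1) l})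
      (prependVertical '' {l | IsPDPath (n + 1) l}) := by
    refine Set.disjoint_left.2 ?_
    rintro _ ⟨r, -, rfl⟩ ⟨r', -, h⟩
    simp only [prependVertical, List.cons.injEq] at h
    split_ifs at h <;> simp at h
  have hABC : Disjoint (List.cons (1, 0) '' {l | IsPDPath (n + 1) l} ∪
      prependVertical '' {l | IsPDPath (n + 1) l})
      ((fun r => (0, -1) :: (1, 0) :: r) '' {l | IsPDPath n l}) := by
    refine Set.disjoint_left.2 ?_
    rintro _ (⟨r, -, rfl⟩ | ⟨r, -, rfl⟩) ⟨r', -, h⟩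
    · simp at h
    · simp only [prependVertical, List.cons.injEq] at h
      split_ifs at h with hS
      · simp [← h.2] at hS
      · simp at h
  have hinj : Function.Injective prependVertical := fun a b h => (List.cons.inj h).2
  rw [numPD_eq_ncard, setOf_isPDPath_add_two, Set.ncard_union_eq hABC
    (((hfin _).image _).union ((hfin _).image _)) ((hfin _).image _),
    Set.ncard_union_eq hAB ((hfin _).image _) ((hfin _).image _),
    Set.ncard_image_of_injective _ List.cons_injective, Set.ncard_image_of_injective _ hinj,
    Set.ncard_image_of_injective _ (fun a b h => by simpa using h)]
  simp only [numPD_eq_ncard]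
  ring

lemma pow_le_and_le_pow_succ_of_recurrence {a : ℕ → ℝ} {r : ℝ} (hr : r ^ 2 = 2 * r + 1)
    (h0 : 1 ≤ a 0 ∧ a 0 ≤ r) (h1 : r ≤ a 1 ∧ a 1 ≤ r ^ 2)
    (hrec : ∀ n, a (n + 2) = 2 * a (n + 1) + a n) (n : ℕ) :
    r ^ n ≤ a n ∧ a n ≤ r ^ (n + 1) := by
  induction n using Nat.twoStepInduction with
  | zero => simpa using h0
  | one => simpa using h1
  | more n ih₀ ih₁ =>
    have hpow : ∀ k, r ^ (k + 2) = 2 * r ^ (k + 1) + r ^ k := fun k => by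
      rw [pow_add, hr]; ring
    rw [hrec, hpow, hpow]
    constructor <;> linarith [ih₀.1, ih₀.2, ih₁.1, ih₁.2]

noncomputable abbrev silverRatio : ℝ := 1 + Real.sqrt 2

lemma silverRatio_pos : 0 < silverRatio := by positivity

lemma silverRatio_sq : silverRatio ^ 2 = 2 * silverRatio + 1 := by
  have := Real.sq_sqrt (show (0 : ℝ) ≤ 2 by norm_num)
  linear_combination this

lemma silverRatio_pow_le_numPD (n : ℕ) :
    silverRatio ^ n ≤ numPD n ∧ (numPD n : ℝ) ≤ silverRatio ^ (n + 1) := by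
  have h2 : Real.sqrt 2 < 2 := by
    rw [Real.sqrt_lt' two_pos]; norm_num
  refine pow_le_and_le_pow_succ_of_recurrence (a := fun n => (numPD n : ℝ)) silverRatio_sq ?_ ?_
    (fun n => ?_) n
  · simp [numPD_zero]
  · simp only [numPD_one, silverRatio_sq, Nat.cast_ofNat]
    constructor <;> linarith [Real.sqrt_nonneg 2]
  · rw [numPD_add_two]; push_cast; ring

/-! ### Loops in the upper half-plane -/

noncomputable def numPDEndAt (n : ℕ) (h : ℤ) : ℕ := {l | IsPDPath n l ∧ l.sum.2 = h}.ncard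

lemma exists_numPD_le_mul_numPDEndAt (n : ℕ) : ∃ h, numPD n ≤ (2 * n + 1) * numPDEndAt n h := by
  obtain ⟨h₀, -, hmax⟩ := (Finset.Icc (-(n : ℤ)) n).exists_max_image (numPDEndAt n) ⟨0, by simp⟩
  refine ⟨h₀, ?_⟩
  have hcover : {l | IsPDPath n l} ⊆
      ⋃ h ∈ Finset.Icc (-(n : ℤ)) n, {l | IsPDPath n l ∧ l.sum.2 = h} := by
    intro l hl
    have := (fst_nonneg_and_abs_snd_le_of_mem_pathVertices hl.2.1 _ (sum_mem_pathVertices l)).2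
    rw [hl.1, abs_le] at this
    simpa using ⟨hl, this⟩
  calc numPD n ≤ (⋃ h ∈ Finset.Icc (-(n : ℤ)) n, {l | IsPDPath n l ∧ l.sum.2 = h}).ncard :=
        Set.ncard_le_ncard hcover ((finite_setOf_isPDPath n).subset fun _ hl => by
          simp only [Set.mem_iUnion] at hl; obtain ⟨_, _, hl⟩ := hl; exact hl.1)
    _ ≤ ∑ h ∈ Finset.Icc (-(n : ℤ)) n, numPDEndAt n h := Finset.set_ncard_biUnion_le _ _
    _ ≤ (Finset.Icc (-(n : ℤ)) n).card • numPDEndAt n h₀ := Finset.sum_le_card_nsmul _ _ _ hmax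
    _ = (2 * n + 1) * numPDEndAt n h₀ := by rw [Int.card_Icc, smul_eq_mul]; congr; omega

lemma numPDEndAt_mul_self_le (n : ℕ) (h : ℤ) :
    numPDEndAt n h * numPDEndAt n h ≤ numPDEndAt (2 * n + 1) 0 := by
  rw [numPDEndAt, ← Set.ncard_prod]
  refine Set.ncard_le_ncard_of_injOn (fun x => x.1 ++ (1, 0) :: reflectPath x.2) ?_ ?_
    (finite_setOf_isPDPath_and _ _)
  · rintro ⟨P, Q⟩ ⟨⟨hP, hPh⟩, hQ, hQh⟩
    refine ⟨by simpa [two_mul, add_right_comm] using hP.append_east hQ.reflectPath, ?_⟩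
    simp [snd_sum_reflectPath, hPh, hQh]
  · rintro ⟨P, Q⟩ ⟨⟨hP, -⟩, -⟩ ⟨P', Q'⟩ ⟨⟨hP', -⟩, -⟩ hPQ
    obtain ⟨rfl, hQQ⟩ := List.append_inj hPQ (hP.1.trans hP'.1.symm)
    exact Prod.ext rfl (reflectPath_injective (List.cons.inj hQQ).2)

lemma exists_append_eq_forall_snd_le (l : List (ℤ × ℤ)) :
    ∃ a b, a ++ b = l ∧ ∀ v ∈ pathVertices l, a.sum.2 ≤ v.2 := by
  obtain ⟨j, -, hmin⟩ :=
    (Finset.range (l.length + 1)).exists_min_image (fun j => (l.take j).sum.2) ⟨0, by simp⟩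
  refine ⟨l.take j, l.drop j, List.take_append_drop j l, fun v hv => ?_⟩
  obtain ⟨i, hi, rfl⟩ := exists_take_sum_eq_of_mem_pathVertices hv
  exact hmin i (by simp; omega)

lemma snd_nonneg_of_mem_pathVertices_rotate {a b : List (ℤ × ℤ)} (hsum : (a ++ b).sum.2 = 0)
    (hmin : ∀ v ∈ pathVertices (a ++ b), a.sum.2 ≤ v.2) :
    ∀ v ∈ pathVertices (b ++ (1, 0) :: a), 0 ≤ v.2 := by
  rw [forall_mem_pathVertices_append] at hmin ⊢
  rw [forall_mem_pathVertices_cons]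
  simp only [List.sum_append, Prod.snd_add] at hsum hmin ⊢
  have ha := hmin.1 0 (zero_mem_pathVertices a)
  simp only [Prod.snd_zero] at ha
  refine ⟨fun v hv => by linarith [hmin.2 v hv], by simp; linarith, fun v hv => ?_⟩
  linarith [hmin.1 v hv]

lemma numPDEndAt_zero_le (N : ℕ) : numPDEndAt N 0 ≤ (N + 1) * numPDhalfEnd0 (N + 1) := by
  choose a b hab hmin using exists_append_eq_forall_snd_le
  have key : numPDEndAt N 0 ≤ ((Finset.range (N + 1) : Set ℕ) ×ˢ
      {l | IsPDPath (N + 1) l ∧ (∀ q ∈ pathVertices l, 0 ≤ q.2) ∧ l.sum.2 = 0}).ncard := by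
    refine Set.ncard_le_ncard_of_injOn (fun l => ((a l).length, b l ++ (1, 0) :: a l)) ?_ ?_
      ((Set.toFinite _).prod (finite_setOf_isPDPath_and _ _))
    · rintro l ⟨hl, hl0⟩
      obtain ⟨ha, hb⟩ := (show IsPDPath N (a l ++ b l) by rwa [hab]).of_append
      have hlen : (a l).length + (b l).length = N := by rw [← List.length_append, hab, hl.1]
      have hsum : (a l ++ b l).sum.2 = 0 := by rwa [hab]
      refine ⟨by simp; omega, (by omega : (b l).length + 1 + (a l).length = N + 1) ▸
        hb.append_east ha, snd_nonneg_of_mem_pathVertices_rotate hsum (by rw [hab]; exact hmin l),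
        ?_⟩
      simp only [List.sum_append, List.sum_cons, Prod.snd_add] at hsum ⊢
      linarith
    · rintro l ⟨hl, -⟩ l' ⟨hl', -⟩ hll'
      simp only [Prod.mk.injEq] at hll'
      have hb : (b l).length = (b l').length := by
        have h1 := congrArg List.length (hab l)
        have h2 := congrArg List.length (hab l')
        simp only [List.length_append, hl.1, hl'.1] at h1 h2
        omega
      obtain ⟨hbb, haa⟩ := List.append_inj hll'.2 hb
      rw [← hab l, ← hab l', hbb, (List.cons.inj haa).2]
  rwa [Set.ncard_prod, Set.ncard_coe_finset, Finset.card_range] at key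

lemma numPD_sq_le (n : ℕ) : numPD n ^ 2 ≤ (2 * n + 3) ^ 3 * numPDhalfEnd0 (2 * n + 2) := by
  obtain ⟨h, hh⟩ := exists_numPD_le_mul_numPDEndAt n
  calc numPD n ^ 2 ≤ ((2 * n + 1) * numPDEndAt n h) ^ 2 := Nat.pow_le_pow_left hh 2
    _ = (2 * n + 1) ^ 2 * (numPDEndAt n h * numPDEndAt n h) := by ring
    _ ≤ (2 * n + 1) ^ 2 * ((2 * n + 2) * numPDhalfEnd0 (2 * n + 2)) :=
        Nat.mul_le_mul_left _ ((numPDEndAt_mul_self_le n h).trans (numPDEndAt_zero_le _))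
    _ ≤ (2 * n + 3) ^ 3 * numPDhalfEnd0 (2 * n + 2) := by
        rw [← mul_assoc]
        gcongr
        nlinarith

/-! ### Paths in the wedge -/

def stripLoops (H n : ℕ) : Set (List (ℤ × ℤ)) :=
  {l | IsPDPath n l ∧ (∀ v ∈ pathVertices l, 0 ≤ v.2 ∧ v.2 ≤ H) ∧ l.sum.2 = 0}

lemma numPDhalfEnd0_le_ncard_stripLoops (L : ℕ) : numPDhalfEnd0 L ≤ (stripLoops L L).ncard := by
  refine Set.ncard_le_ncard (fun l ⟨hl, hv, hl0⟩ => ⟨hl, fun v hv' => ⟨hv v hv', ?_⟩, hl0⟩)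
    (finite_setOf_isPDPath_and _ _)
  have := (fst_nonneg_and_abs_snd_le_of_mem_pathVertices hl.2.1 v hv').2
  rw [hl.1] at this
  exact le_of_abs_le this

lemma ncard_stripLoops_mul_le (H m n : ℕ) :
    (stripLoops H m).ncard * (stripLoops H n).ncard ≤ (stripLoops H (m + 1 + n)).ncard := by
  rw [← Set.ncard_prod]
  refine Set.ncard_le_ncard_of_injOn (fun x => x.1 ++ (1, 0) :: x.2) ?_ ?_
    (finite_setOf_isPDPath_and _ _)
  · rintro ⟨q, t⟩ ⟨⟨hq, hqv, hq0⟩, ht, htv, ht0⟩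
    refine ⟨hq.append_east ht, forall_mem_pathVertices_append.2 ⟨hqv,
      forall_mem_pathVertices_cons.2 ⟨by simp [hq0], fun v hv => ?_⟩⟩, by simp [hq0, ht0]⟩
    simpa [hq0] using htv v hv
  · rintro ⟨q, t⟩ ⟨⟨hq, -⟩, -⟩ ⟨q', t'⟩ ⟨⟨hq', -⟩, -⟩ h
    obtain ⟨rfl, htt⟩ := List.append_inj h (hq.1.trans hq'.1.symm)
    exact Prod.ext rfl (List.cons.inj htt).2

lemma ncard_stripLoops_pow_le (H L k : ℕ) :
    (stripLoops H L).ncard ^ (k + 1) ≤ (stripLoops H (L + k * (L + 1))).ncard := by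
  induction k with
  | zero => simp
  | succ k ih =>
    calc (stripLoops H L).ncard ^ (k + 1 + 1)
        = (stripLoops H L).ncard * (stripLoops H L).ncard ^ (k + 1) := by ring
      _ ≤ (stripLoops H L).ncard * (stripLoops H (L + k * (L + 1))).ncard := by gcongr
      _ ≤ (stripLoops H (L + (k + 1) * (L + 1))).ncard := by
        convert ncard_stripLoops_mul_le H L (L + k * (L + 1)) using 3
        ring

lemma InAsymWedge.east_add {p : ℕ} {v : ℤ × ℤ} (hv : InAsymWedge p v) :
    InAsymWedge p ((1, 0) + v) := by
  obtain ⟨h1, h2, h3⟩ := hv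
  refine ⟨by simp; omega, by simpa using h2, ?_⟩
  simp only [Prod.fst_add, Prod.snd_add, zero_add]
  nlinarith

lemma inAsymWedge_of_mem_pathVertices_replicate_east (p H : ℕ) :
    ∀ v ∈ pathVertices (List.replicate H (1, 0)), InAsymWedge p v := by
  induction H with
  | zero => simp [pathVertices, InAsymWedge]
  | succ H ih =>
    exact forall_mem_pathVertices_cons.2 ⟨by simp [InAsymWedge], fun v hv => (ih v hv).east_add⟩

lemma ncard_stripLoops_le_numPDasym {p : ℕ} (hp : 1 ≤ p) (H n : ℕ) :
    (stripLoops H n).ncard ≤ numPDasym p (H + n) := by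
  refine Set.ncard_le_ncard_of_injOn (List.replicate H (1, 0) ++ ·) ?_
    (fun _ _ _ _ h => List.append_cancel_left h) (finite_setOf_isPDPath_and _ _)
  rintro t ⟨ht, htv, -⟩
  refine ⟨ht.replicate_east_append, forall_mem_pathVertices_append.2
    ⟨inAsymWedge_of_mem_pathVertices_replicate_east p H, fun v hv => ?_⟩⟩
  obtain ⟨h1, -⟩ := fst_nonneg_and_abs_snd_le_of_mem_pathVertices ht.2.1 v hv
  obtain ⟨h2, h3⟩ := htv v hv
  refine ⟨by simp; omega, by simpa using h2, ?_⟩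
  simp only [List.sum_replicate, Prod.smul_mk, nsmul_eq_mul, mul_one, smul_zero, Prod.fst_add,
    Prod.snd_add, zero_add]
  have : (1 : ℤ) ≤ p := by exact_mod_cast hp
  nlinarith

lemma pow_numPDhalfEnd0_le_numPDasym {p : ℕ} (hp : 1 ≤ p) (L k : ℕ) :
    numPDhalfEnd0 L ^ (k + 1) ≤ numPDasym p (L + L + k * (L + 1)) := by
  rw [add_assoc]
  calc numPDhalfEnd0 L ^ (k + 1) ≤ (stripLoops L L).ncard ^ (k + 1) := by
        gcongr; exact numPDhalfEnd0_le_ncard_stripLoops L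
    _ ≤ _ := (ncard_stripLoops_pow_le L L k).trans (ncard_stripLoops_le_numPDasym hp _ _)

lemma one_le_numPDhalfEnd0 (L : ℕ) : 1 ≤ numPDhalfEnd0 L := by
  refine (Set.ncard_pos (finite_setOf_isPDPath_and _ _)).2
    ⟨List.replicate L (1, 0), isPDPath_replicate_east L, fun v hv => ?_, by simp⟩
  exact (inAsymWedge_of_mem_pathVertices_replicate_east 0 L v hv).2.1

lemma numPDasym_mono (p : ℕ) : Monotone (numPDasym p) := by
  refine monotone_nat_of_le_succ fun n => Set.ncard_le_ncard_of_injOn (· ++ [(1, 0)]) ?_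
    (fun _ _ _ _ h => List.append_cancel_right h) (finite_setOf_isPDPath_and _ _)
  rintro l ⟨hl, hlv⟩
  exact ⟨hl.append_east isPDPath_nil, forall_mem_pathVertices_append.2 ⟨hlv,
    forall_mem_pathVertices_cons.2 ⟨by simpa using hlv _ (sum_mem_pathVertices l), by
      simpa [pathVertices, add_comm l.sum] using (hlv _ (sum_mem_pathVertices l)).east_add⟩⟩⟩

lemma numPDasym_le_numPDsym (p n : ℕ) : numPDasym p n ≤ numPDsym p n :=
  Set.ncard_le_ncard (fun l ⟨hl, hlv⟩ => ⟨hl, fun v hv => by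
    obtain ⟨h1, h2, h3⟩ := hlv v hv
    exact ⟨h1, by nlinarith, h3⟩⟩) (finite_setOf_isPDPath_and _ _)

lemma numPDsym_le_numPD (p n : ℕ) : numPDsym p n ≤ numPD n :=
  Set.ncard_le_ncard (fun _ hl => hl.1) (finite_setOf_isPDPath n)

/-! ### Growth rates -/

lemma eventually_rpow_inv_lt_of_le_pow {u : ℕ → ℝ} {r b : ℝ} (hr : 0 < r) (hu : ∀ n, 0 ≤ u n)
    (hle : ∀ n, u n ≤ r ^ (n + 1)) (hb : r < b) :
    ∀ᶠ n : ℕ in atTop, u n ^ (n : ℝ)⁻¹ < b := by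
  have hexp : Tendsto (fun n : ℕ => ((n : ℝ) + 1) * (n : ℝ)⁻¹) atTop (𝓝 1) := by
    have h : Tendsto (fun n : ℕ => 1 + (n : ℝ)⁻¹) atTop (𝓝 1) := by
      simpa using tendsto_inv_atTop_nhds_zero_nat.const_add (1 : ℝ)
    refine h.congr' ?_
    filter_upwards [eventually_ne_atTop 0] with n hn
    field_simp
  have hlim := (tendsto_const_nhds (x := r)).rpow hexp (Or.inl hr.ne')
  rw [Real.rpow_one] at hlim
  filter_upwards [hlim.eventually (gt_mem_nhds hb)] with n hn
  calc u n ^ (n : ℝ)⁻¹ ≤ (r ^ (n + 1)) ^ (n : ℝ)⁻¹ :=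
        Real.rpow_le_rpow (hu n) (hle n) (by positivity)
    _ = r ^ (((n : ℝ) + 1) * (n : ℝ)⁻¹) := by
        rw [← Real.rpow_natCast, ← Real.rpow_mul hr.le]; push_cast; rfl
    _ < b := hn

lemma eventually_lt_rpow_inv_of_pow_le {u : ℕ → ℕ} (hu : Monotone u) {m a d : ℕ} (hm : 1 ≤ m)
    (hd : 0 < d) (hpow : ∀ k, m ^ k ≤ u (a + k * d)) {b : ℝ} (hb : b < (m : ℝ) ^ (d : ℝ)⁻¹) :
    ∀ᶠ n : ℕ in atTop, b < (u n : ℝ) ^ (n : ℝ)⁻¹ := by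
  set e : ℕ → ℝ := fun n => ((n : ℝ) - a - d) / d * (n : ℝ)⁻¹
  have hdR : (0 : ℝ) < d := by exact_mod_cast hd
  have hexp : Tendsto e atTop (𝓝 (d : ℝ)⁻¹) := by
    have := ((tendsto_inv_atTop_nhds_zero_nat (𝕜 := ℝ)).const_mul (((a : ℝ) + d) / d)).const_sub
      (d : ℝ)⁻¹
    rw [mul_zero, sub_zero] at this
    refine this.congr' ?_
    filter_upwards [eventually_ne_atTop 0] with n hn
    simp only [e]
    field_simp
    ring
  have hm1 : (1 : ℝ) ≤ m := by exact_mod_cast hm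
  have hlim := (tendsto_const_nhds (x := (m : ℝ))).rpow hexp (Or.inl (by positivity))
  filter_upwards [hlim.eventually (lt_mem_nhds hb), eventually_ge_atTop (a + 1)] with n hn hna
  set k := (n - a) / d
  have hk : ((n : ℝ) - a - d) / d ≤ k := by
    rw [div_le_iff₀ hdR]
    have := Nat.lt_div_mul_add (a := n - a) hd
    have : (n : ℝ) - a < (k * d + d : ℕ) := by
      rw [← Nat.cast_sub (by omega : a ≤ n)]; exact_mod_cast this
    push_cast at this
    linarith
  have hkd : k * d ≤ n - a := Nat.div_mul_le_self _ _
  have hku : m ^ k ≤ u n := (hpow k).trans (hu (by omega))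
  refine hn.trans_le ?_
  calc (m : ℝ) ^ e n ≤ (m : ℝ) ^ ((k : ℝ) * (n : ℝ)⁻¹) :=
        Real.rpow_le_rpow_of_exponent_le hm1 (mul_le_mul_of_nonneg_right hk (by positivity))
    _ = ((m ^ k : ℕ) : ℝ) ^ (n : ℝ)⁻¹ := by
        rw [Real.rpow_mul (by positivity)]; push_cast; rw [Real.rpow_natCast]
    _ ≤ (u n : ℝ) ^ (n : ℝ)⁻¹ :=
        Real.rpow_le_rpow (by positivity) (by exact_mod_cast hku) (by positivity)

lemma tendsto_rpow_sub_div_pow_rpow_inv {r : ℝ} (hr : 0 < r) (c : ℝ) (k : ℕ) :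
    Tendsto (fun x : ℝ => (r ^ (x - c) / x ^ k) ^ x⁻¹) atTop (𝓝 r) := by
  have hexp : Tendsto (fun x : ℝ => r ^ (1 - c * x⁻¹)) atTop (𝓝 r) := by
    have := ((tendsto_inv_atTop_zero (𝕜 := ℝ)).const_mul c).const_sub 1
    rw [mul_zero, sub_zero] at this
    simpa using (tendsto_const_nhds (x := r)).rpow this (Or.inl hr.ne')
  have hroot : Tendsto (fun x : ℝ => (x ^ x⁻¹) ^ k) atTop (𝓝 1) := by
    simpa using (tendsto_rpow_div.congr fun x => by rw [one_div]).pow k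
  have h : Tendsto (fun x : ℝ => r ^ (1 - c * x⁻¹) / (x ^ x⁻¹) ^ k) atTop (𝓝 r) := by
    have := hexp.div hroot one_ne_zero
    rwa [div_one] at this
  refine h.congr' ?_
  filter_upwards [eventually_gt_atTop 0] with x hx
  rw [Real.div_rpow (by positivity) (by positivity), ← Real.rpow_mul hr.le,
    ← Real.rpow_natCast, ← Real.rpow_natCast, ← Real.rpow_mul hx.le, ← Real.rpow_mul hx.le,
    mul_comm (k : ℝ)]
  congr 2
  field_simp

lemma exists_lt_numPDhalfEnd0_rpow_inv {b : ℝ} (hb : b < silverRatio) :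
    ∃ L : ℕ, b < (numPDhalfEnd0 L : ℝ) ^ ((L + 1 : ℕ) : ℝ)⁻¹ := by
  have hx : Tendsto (fun n : ℕ => ((2 * n + 3 : ℕ) : ℝ)) atTop atTop :=
    tendsto_atTop_mono (fun n => by push_cast; linarith) tendsto_natCast_atTop_atTop
  obtain ⟨n, hn⟩ := ((tendsto_rpow_sub_div_pow_rpow_inv silverRatio_pos 3 3).comp hx
    |>.eventually (lt_mem_nhds hb)).exists
  refine ⟨2 * n + 2, hn.trans_le (Real.rpow_le_rpow (by positivity) ?_ (by positivity))⟩
  change silverRatio ^ (((2 * n + 3 : ℕ) : ℝ) - 3) / ((2 * n + 3 : ℕ) : ℝ) ^ 3 ≤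
    numPDhalfEnd0 (2 * n + 2)
  have hpow : silverRatio ^ (((2 * n + 3 : ℕ) : ℝ) - 3) = (silverRatio ^ n) ^ 2 := by
    rw [← pow_mul, ← Real.rpow_natCast]; push_cast; ring_nf
  rw [hpow, div_le_iff₀ (by positivity), mul_comm]
  calc (silverRatio ^ n) ^ 2 ≤ (numPD n : ℝ) ^ 2 := by
        gcongr; exact (silverRatio_pow_le_numPD n).1
    _ ≤ _ := by exact_mod_cast numPD_sq_le n

theorem wedge_growth_constants (p : ℕ) (hp : 1 ≤ p) :
    Filter.Tendsto (fun n : ℕ => (numPDsym p n : ℝ) ^ ((n : ℝ)⁻¹)) Filter.atTop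
      (nhds (1 + Real.sqrt 2)) ∧
    Filter.Tendsto (fun n : ℕ => (numPDasym p n : ℝ) ^ ((n : ℝ)⁻¹)) Filter.atTop
      (nhds (1 + Real.sqrt 2)) := by
  have hlower (b : ℝ) (hb : b < silverRatio) :
      ∀ᶠ n : ℕ in atTop, b < (numPDasym p n : ℝ) ^ (n : ℝ)⁻¹ := by
    obtain ⟨L, hL⟩ := exists_lt_numPDhalfEnd0_rpow_inv hb
    have hm := one_le_numPDhalfEnd0 L
    exact eventually_lt_rpow_inv_of_pow_le (numPDasym_mono p) hm L.succ_pos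
      (fun k => (Nat.pow_le_pow_right hm (k.le_add_right 1)).trans
        (pow_numPDhalfEnd0_le_numPDasym hp L k)) hL
  have hupper (b : ℝ) (hb : silverRatio < b) :
      ∀ᶠ n : ℕ in atTop, (numPDsym p n : ℝ) ^ (n : ℝ)⁻¹ < b :=
    eventually_rpow_inv_lt_of_le_pow silverRatio_pos (fun n => by positivity)
      (fun n => (Nat.cast_le.2 (numPDsym_le_numPD p n)).trans (silverRatio_pow_le_numPD n).2) hb
  have hle (n : ℕ) : (numPDasym p n : ℝ) ^ (n : ℝ)⁻¹ ≤ (numPDsym p n : ℝ) ^ (n : ℝ)⁻¹ :=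
    Real.rpow_le_rpow (by positivity) (by exact_mod_cast numPDasym_le_numPDsym p n)
      (by positivity)
  exact ⟨tendsto_order.2 ⟨fun b hb => (hlower b hb).mono fun n hn => hn.trans_le (hle n), hupper⟩,
    tendsto_order.2 ⟨hlower, fun b hb => (hupper b hb).mono fun n hn => (hle n).trans_lt hn⟩⟩
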